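/- arXiv:1406.6725 — 8 statements merged into one kernel-verified Lean document; each statement's English description precedes it below -/
import Mathlib

section
/- Let X be a separable real Banach space that contains an isomorphic copy of ℓ¹ (i.e., there exist a continuous linear map T : ℓ¹(ℕ;ℝ) → X and a constant c > 0 such that ‖Tx‖ ≥ c‖x‖ for all x). Then there exists μ ∈ X** such that the singleton {μ}, a norm-compact convex subset of X**, is not representable: there is no nested sequence (C_n) of nonempty bounded closed convex subsets of X with {μ} = ⋂_{n∈ℕ} cl_{w*}(J(C_n)). -/
/-!
If `{μ} = ⋂ cl_{w*} J(C_n)`, then `μ` is the weak* limit of `J(x_n)` for any choice of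
`x_n ∈ C_n`: these points lie in the weak*-compact set `cl_{w*} J(C_0)`, and each of their
cluster points lies in every `cl_{w*} J(C_m)`, hence equals `μ`. A separable `X` has at most `𝔠`
sequences, so at most `𝔠` singletons are representable. On the other hand, the unit vectors of the
copy of `ℓ¹` form a bounded family on which every `0/1` pattern is realised by a functional
(Hahn–Banach), so weak* limits of this family along distinct ultrafilters are distinct; as a
countable set carries `2 ^ 𝔠` ultrafilters (Hausdorff's independent family), `X**` has at least
`2 ^ 𝔠 > 𝔠` points.
-/

open NormedSpace Filter Topology

/-- The weak*-closure of a subset of the bidual `X** = Dual ℝ (Dual ℝ X)`. -/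
noncomputable def wClosure {X : Type*} [NormedAddCommGroup X] [NormedSpace ℝ X]
    (S : Set (StrongDual ℝ (StrongDual ℝ X))) :
    Set (StrongDual ℝ (StrongDual ℝ X)) :=
  ⇑StrongDual.toWeakDual ⁻¹' closure (⇑StrongDual.toWeakDual '' S)

open Set Cardinal

theorem Cardinal.mk_le_continuum_of_separableSpace {X : Type*} [TopologicalSpace X] [T2Space X]
    [FrechetUrysohnSpace X] [TopologicalSpace.SeparableSpace X] : #X ≤ 𝔠 := by
  obtain ⟨D, hDc, hDd⟩ := TopologicalSpace.exists_countable_dense X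
  have hseq (x : X) : ∃ u : ℕ → D, Tendsto (fun n => (u n : X)) atTop (𝓝 x) := by
    obtain ⟨u, huD, hu⟩ := mem_closure_iff_seq_limit.1 (hDd.closure_eq ▸ mem_univ x)
    exact ⟨fun n => ⟨u n, huD n⟩, hu⟩
  choose u hu using hseq
  have hinj : Function.Injective u := fun x y hxy => tendsto_nhds_unique (hu x) (hxy ▸ hu y)
  calc #X ≤ #(ℕ → D) := mk_le_of_injective hinj
    _ = #D ^ ℵ₀ := by simp
    _ ≤ ℵ₀ ^ ℵ₀ := power_le_power_right hDc.le_aleph0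
    _ = 𝔠 := aleph0_power_aleph0

theorem Cardinal.mk_nat_arrow_le_continuum {X : Type*} (hX : #X ≤ 𝔠) : #(ℕ → X) ≤ 𝔠 :=
  calc #(ℕ → X) = #X ^ ℵ₀ := by simp
    _ ≤ 𝔠 ^ ℵ₀ := power_le_power_right hX
    _ = 𝔠 := continuum_power_aleph0

theorem Set.Finite.exists_finset_injOn_inter {α : Type*} [Nonempty α] {t : Set (Set α)}
    (ht : t.Finite) : ∃ s : Finset α, InjOn (fun S => (s : Set α) ∩ S) t := by
  have hsep (p : Set α × Set α) (h : p.1 ≠ p.2) : ∃ a, ¬(a ∈ p.1 ↔ a ∈ p.2) := by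
    simpa [Set.ext_iff] using h
  choose! sep hsep using hsep
  refine ⟨(ht.offDiag.image sep).toFinset, fun S hS S' hS' hSS' => ?_⟩
  by_contra hne
  have hmem : sep (S, S') ∈ (ht.offDiag.image sep).toFinset := by
    simpa using ⟨S, S', ⟨hS, hS', hne⟩, rfl⟩
  have := Set.ext_iff.1 hSS' (sep (S, S'))
  simp only [mem_inter_iff, Finset.mem_coe, hmem, true_and] at this
  exact hsep (S, S') hne this

-- Hausdorff's independent family of subsets of a countable set, indexed by `Set ℕ`.
def indepSet (S : Set ℕ) : Set (Finset ℕ × Finset (Finset ℕ)) :=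
  {p | ∃ F ∈ p.2, (F : Set ℕ) = ↑p.1 ∩ S}

theorem exists_forall_mem_indepSet_iff (𝒮 : Set (Set ℕ)) {t : Set (Set ℕ)} (ht : t.Finite) :
    ∃ p, ∀ S ∈ t, p ∈ indepSet S ↔ S ∈ 𝒮 := by
  classical
  obtain ⟨s, hs⟩ := ht.exists_finset_injOn_inter
  refine ⟨(s, (ht.toFinset.filter (· ∈ 𝒮)).image fun S => {n ∈ s | n ∈ S}), fun S hS => ⟨?_, ?_⟩⟩
  · rintro ⟨F, hF, hFS⟩
    obtain ⟨S', hS', rfl⟩ := Finset.mem_image.1 hF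
    simp only [Finset.mem_filter, Finite.mem_toFinset] at hS'
    refine hs hS'.1 hS ?_ ▸ hS'.2
    rwa [Finset.coe_filter] at hFS
  · intro h𝒮
    exact ⟨_, Finset.mem_image_of_mem _ (by simpa using ⟨hS, h𝒮⟩), by ext; simp⟩

theorem exists_ultrafilter_indepSet_mem_iff (𝒮 : Set (Set ℕ)) :
    ∃ U : Ultrafilter (Finset ℕ × Finset (Finset ℕ)), ∀ S, indepSet S ∈ U ↔ S ∈ 𝒮 := by
  let f := ⨅ S, 𝓟 {p | p ∈ indepSet S ↔ S ∈ 𝒮}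
  have : f.NeBot := by
    refine (hasBasis_iInf_principal_finite _).neBot_iff.2 fun ht => ?_
    obtain ⟨p, hp⟩ := exists_forall_mem_indepSet_iff 𝒮 ht
    exact ⟨p, mem_iInter₂.2 hp⟩
  refine ⟨Ultrafilter.of f, fun S => ?_⟩
  have hS : {p | p ∈ indepSet S ↔ S ∈ 𝒮} ∈ Ultrafilter.of f :=
    Ultrafilter.of_le f (mem_iInf_of_mem S (mem_principal_self _))
  by_cases h𝒮 : S ∈ 𝒮
  · simpa [h𝒮] using hS
  · simp only [h𝒮, iff_false] at hS ⊢
    exact Ultrafilter.compl_mem_iff_notMem.1 hS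

theorem two_power_continuum_le_mk_ultrafilter :
    2 ^ 𝔠 ≤ #(Ultrafilter (Finset ℕ × Finset (Finset ℕ))) := by
  choose U hU using exists_ultrafilter_indepSet_mem_iff
  have hinj : Function.Injective U := fun 𝒮 𝒮' h => Set.ext fun S => by
    rw [← hU, ← hU, h]
  calc 2 ^ 𝔠 = #(Set (Set ℕ)) := by simp [mk_set]
    _ ≤ _ := mk_le_of_injective hinj

theorem lp.exists_dual_single_eq {α : Type*} [DecidableEq α] {b : α → ℝ} {K : ℝ}
    (hK : 0 ≤ K) (hb : ∀ a, ‖b a‖ ≤ K) :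
    ∃ ψ : StrongDual ℝ (lp (fun _ : α => ℝ) 1), ∀ a, ψ (lp.single 1 a 1) = b a := by
  refine ⟨(lp.tsumCLM ℝ α ℝ).comp (lp.mapCLM 1 (fun a => b a • ContinuousLinearMap.id ℝ ℝ) hK
    fun a => ?_), fun a => ?_⟩
  · rw [norm_smul, ContinuousLinearMap.norm_id, mul_one]
    exact hb a
  · simp [Pi.single_apply]

theorem ContinuousLinearMap.exists_dual_comp_eq {𝕜 E F : Type*} [RCLike 𝕜]
    [NormedAddCommGroup E] [NormedSpace 𝕜 E] [NormedAddCommGroup F] [NormedSpace 𝕜 F]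
    (T : E →L[𝕜] F) {c : ℝ} (hc : 0 < c) (hT : ∀ y, c * ‖y‖ ≤ ‖T y‖) (ψ : StrongDual 𝕜 E) :
    ∃ g : StrongDual 𝕜 F, g.comp T = ψ := by
  have hinj : Function.Injective T := (injective_iff_map_eq_zero T).2 fun y hy =>
    norm_le_zero_iff.1 (le_of_mul_le_mul_left (by simpa [hy] using hT y) hc)
  let e := LinearEquiv.ofInjective T.toLinearMap hinj
  let f : StrongDual 𝕜 (LinearMap.range T.toLinearMap) :=
    (ψ.toLinearMap.comp e.symm.toLinearMap).mkContinuous (‖ψ‖ / c) fun z => by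
      obtain ⟨y, rfl⟩ := e.surjective z
      calc ‖ψ (e.symm (e y))‖ = ‖ψ y‖ := by rw [e.symm_apply_apply]
        _ ≤ ‖ψ‖ * ‖y‖ := ψ.le_opNorm y
        _ ≤ ‖ψ‖ / c * ‖e y‖ := by
          rw [div_mul_eq_mul_div, le_div_iff₀ hc, mul_assoc]
          exact mul_le_mul_of_nonneg_left (mul_comm c _ ▸ hT y) (norm_nonneg ψ)
  obtain ⟨g, hg, -⟩ := exists_extension_norm_eq _ f
  refine ⟨g, ContinuousLinearMap.ext fun y => ?_⟩
  simpa [f, e] using hg (e y)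

section WeakStarLimit

variable {X ι : Type*} [NormedAddCommGroup X] [NormedSpace ℝ X]

noncomputable def weakStarLim (v : ι → X) (U : Ultrafilter ι) : WeakDual ℝ (StrongDual ℝ X) :=
  limUnder (U : Filter ι) fun i => StrongDual.toWeakDual (inclusionInDoubleDual ℝ X (v i))

variable {v : ι → X} {R : ℝ}

theorem tendsto_weakStarLim (hv : ∀ i, ‖v i‖ ≤ R) (U : Ultrafilter ι) :
    Tendsto (fun i => StrongDual.toWeakDual (inclusionInDoubleDual ℝ X (v i))) U
      (𝓝 (weakStarLim v U)) := by
  refine tendsto_nhds_limUnder ?_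
  obtain ⟨μ, -, hμ⟩ := (WeakDual.isCompact_closedBall (0 : StrongDual ℝ (StrongDual ℝ X)) R)
    |>.ultrafilter_le_nhds (U.map _) <| le_principal_iff.2 <| Ultrafilter.mem_map.2 <|
      univ_mem' fun i => mem_closedBall_zero_iff.2 ((double_dual_bound ℝ X (v i)).trans (hv i))
  exact ⟨μ, hμ⟩

theorem weakStarLim_apply_eq (hv : ∀ i, ‖v i‖ ≤ R) {U : Ultrafilter ι} {g : StrongDual ℝ X}
    {b : ℝ} (hgb : ∀ᶠ i in U, g (v i) = b) : weakStarLim v U g = b :=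
  tendsto_nhds_unique_of_eventuallyEq
    (((WeakDual.eval_continuous g).tendsto _).comp (tendsto_weakStarLim hv U))
    tendsto_const_nhds hgb

theorem weakStarLim_injective (hv : ∀ i, ‖v i‖ ≤ R)
    (hsep : ∀ A : Set ι, ∃ g : StrongDual ℝ X, ∀ i, g (v i) = A.indicator 1 i) :
    Function.Injective (weakStarLim v) := by
  intro U V hUV
  by_contra hne
  obtain ⟨A, hAU, hAV⟩ : ∃ A ∈ U, A ∉ V := by
    by_contra! h
    exact hne (Ultrafilter.coe_le_coe.1 h).symm
  obtain ⟨g, hg⟩ := hsep A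
  have h1 : weakStarLim v U g = 1 := weakStarLim_apply_eq hv <|
    Eventually.mono hAU fun i hi => by rw [hg, indicator_of_mem hi, Pi.one_apply]
  have h0 : weakStarLim v V g = 0 := weakStarLim_apply_eq hv <|
    Eventually.mono (Ultrafilter.compl_mem_iff_notMem.2 hAV) fun i hi => by
      rw [hg, indicator_of_notMem hi]
  rw [hUV] at h1
  exact one_ne_zero (h1.symm.trans h0)

theorem two_power_continuum_le_mk_bidual_of_l1 (T : lp (fun _ : ℕ => ℝ) 1 →L[ℝ] X) {c : ℝ}
    (hc : 0 < c) (hT : ∀ y, c * ‖y‖ ≤ ‖T y‖) :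
    2 ^ 𝔠 ≤ #(WeakDual ℝ (StrongDual ℝ X)) := by
  let v (i : Finset ℕ × Finset (Finset ℕ)) : X := T (lp.single 1 (Encodable.encode i) 1)
  have hv (i) : ‖v i‖ ≤ ‖T‖ := by
    simpa [lp.norm_single] using T.le_opNorm (lp.single 1 (Encodable.encode i) 1)
  have hsep (A : Set (Finset ℕ × Finset (Finset ℕ))) :
      ∃ g : StrongDual ℝ X, ∀ i, g (v i) = A.indicator 1 i := by
    obtain ⟨ψ, hψ⟩ := lp.exists_dual_single_eq (b := (Encodable.encode '' A).indicator 1)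
      zero_le_one fun n => by simpa using norm_indicator_le_norm_self (1 : ℕ → ℝ) n
    obtain ⟨g, hg⟩ := T.exists_dual_comp_eq hc hT ψ
    refine ⟨g, fun i => ?_⟩
    rw [← ContinuousLinearMap.comp_apply, hg, hψ, indicator_image Encodable.encode_injective]
    rfl
  calc (2 ^ 𝔠 : Cardinal) = lift (2 ^ 𝔠 : Cardinal.{0}) := by simp
    _ ≤ lift #(Ultrafilter (Finset ℕ × Finset (Finset ℕ))) :=
      lift_le.2 two_power_continuum_le_mk_ultrafilter
    _ ≤ lift #(WeakDual ℝ (StrongDual ℝ X)) :=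
      lift_mk_le_lift_mk_of_injective (weakStarLim_injective hv hsep)
    _ = #(WeakDual ℝ (StrongDual ℝ X)) := lift_uzero _

end WeakStarLimit

theorem tendsto_of_iInter_wClosure_eq_singleton {X : Type*} [NormedAddCommGroup X]
    [NormedSpace ℝ X] {μ : StrongDual ℝ (StrongDual ℝ X)} {C : ℕ → Set X}
    (hbdd : Bornology.IsBounded (C 0)) (hC : Antitone C)
    (hμ : {μ} = ⋂ n, wClosure (inclusionInDoubleDual ℝ X '' C n))
    {x : ℕ → X} (hx : ∀ n, x n ∈ C n) :
    Tendsto (fun n => StrongDual.toWeakDual (inclusionInDoubleDual ℝ X (x n))) atTop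
      (𝓝 (StrongDual.toWeakDual μ)) := by
  set K : ℕ → Set (WeakDual ℝ (StrongDual ℝ X)) :=
    fun m => closure (StrongDual.toWeakDual '' (inclusionInDoubleDual ℝ X '' C m))
  have hxK {m n : ℕ} (hmn : m ≤ n) :
      StrongDual.toWeakDual (inclusionInDoubleDual ℝ X (x n)) ∈ K m :=
    subset_closure (mem_image_of_mem _ (mem_image_of_mem _ (hC hmn (hx n))))
  obtain ⟨R, hR⟩ := hbdd.subset_closedBall 0
  have hK0 : IsCompact (K 0) := by
    refine (WeakDual.isCompact_closedBall 0 R).of_isClosed_subset isClosed_closure <|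
      closure_minimal ?_ (WeakDual.isClosed_closedBall 0 R)
    rintro - ⟨-, ⟨y, hy, rfl⟩, rfl⟩
    exact mem_closedBall_zero_iff.2 <|
      (double_dual_bound ℝ X y).trans (mem_closedBall_zero_iff.1 (hR hy))
  refine hK0.tendsto_nhds_of_unique_mapClusterPt (Eventually.of_forall fun n => hxK n.zero_le)
    fun w _ hw => ?_
  have hwK (m : ℕ) : w ∈ K m := by
    refine closure_minimal ?_ isClosed_closure (mapClusterPt_atTop_iff_forall_mem_closure.1 hw m)
    rintro - ⟨n, hmn, rfl⟩
    exact hxK hmn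
  have hwμ : WeakDual.toStrongDual w ∈ ({μ} : Set _) := hμ ▸ mem_iInter.2 hwK
  exact congrArg StrongDual.toWeakDual hwμ

theorem exists_singleton_not_representable_of_l1_general
    {X : Type*} [NormedAddCommGroup X] [NormedSpace ℝ X]
    [TopologicalSpace.SeparableSpace X]
    (hl1 : ∃ (T : lp (fun _ : ℕ => ℝ) 1 →L[ℝ] X) (c : ℝ), 0 < c ∧
      ∀ y : lp (fun _ : ℕ => ℝ) 1, c * ‖y‖ ≤ ‖T y‖) :
    ∃ μ : StrongDual ℝ (StrongDual ℝ X),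
      ¬ ∃ C : ℕ → Set X,
        (∀ n, (C n).Nonempty) ∧ (∀ n, Bornology.IsBounded (C n)) ∧
        (∀ n, IsClosed (C n)) ∧ (∀ n, Convex ℝ (C n)) ∧ (∀ n, C (n + 1) ⊆ C n) ∧
        {μ} = ⋂ n, wClosure (⇑(inclusionInDoubleDual ℝ X) '' C n) := by
  obtain ⟨T, c, hc, hT⟩ := hl1
  by_contra! hrep
  have hseq (w : WeakDual ℝ (StrongDual ℝ X)) : ∃ x : ℕ → X,
      Tendsto (fun n => StrongDual.toWeakDual (inclusionInDoubleDual ℝ X (x n))) atTop (𝓝 w) := by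
    obtain ⟨C, hne, hbdd, -, -, hC, hμ⟩ := hrep (WeakDual.toStrongDual w)
    choose x hx using hne
    exact ⟨x, tendsto_of_iInter_wClosure_eq_singleton (hbdd 0) (antitone_nat_of_succ_le hC) hμ hx⟩
  choose x hx using hseq
  have hinj : Function.Injective x := fun w w' h => tendsto_nhds_unique (hx w) (h ▸ hx w')
  have h𝔠 : 2 ^ 𝔠 ≤ 𝔠 := (two_power_continuum_le_mk_bidual_of_l1 T hc hT).trans <|
    (mk_le_of_injective hinj).trans (mk_nat_arrow_le_continuum mk_le_continuum_of_separableSpace)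
  exact (cantor 𝔠).not_ge h𝔠

/-- If a separable Banach space `X` contains an isomorphic copy of `ℓ¹`, then some singleton
`{μ} ⊆ X**` (a norm-compact convex set) is not representable by a nested sequence of nonempty
bounded closed convex subsets of `X`. -/
theorem exists_singleton_not_representable_of_l1
    {X : Type*} [NormedAddCommGroup X] [NormedSpace ℝ X] [CompleteSpace X]
    [TopologicalSpace.SeparableSpace X]
    (hl1 : ∃ (T : lp (fun _ : ℕ => ℝ) 1 →L[ℝ] X) (c : ℝ), 0 < c ∧
      ∀ y : lp (fun _ : ℕ => ℝ) 1, c * ‖y‖ ≤ ‖T y‖) :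
    ∃ μ : StrongDual ℝ (StrongDual ℝ X),
      ¬ ∃ C : ℕ → Set X,
        (∀ n, (C n).Nonempty) ∧ (∀ n, Bornology.IsBounded (C n)) ∧
        (∀ n, IsClosed (C n)) ∧ (∀ n, Convex ℝ (C n)) ∧ (∀ n, C (n + 1) ⊆ C n) ∧
        {μ} = ⋂ n, wClosure (⇑(inclusionInDoubleDual ℝ X) '' C n) :=
  exists_singleton_not_representable_of_l1_general hl1
end

section
/- Let X be a real Banach space, let (C_n) be a nested sequence of nonempty bounded closed convex subsets of X, and suppose that ⋂_{n∈ℕ} cl_{w*}(J(C_n)) = {μ} for some μ ∈ X**. Then for every choice of points c_n ∈ C_n (n ∈ ℕ), the sequence (J(c_n)) converges to μ in the weak* topology of X**. -/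
/-!
The weak*-closures `Kₙ` of the bounded sets `J(Cₙ)` are weak*-compact by Banach–Alaoglu and
decrease with `n`. A decreasing sequence of compact closed sets eventually enters every
neighbourhood of its intersection, here `{μ}`; since `J(cₙ) ∈ Kₙ`, this is the claimed
convergence.
-/

open NormedSpace Filter Topology

theorem Antitone.tendsto_of_iInter_subset_singleton {ι α : Type*} [Preorder ι] [IsDirectedOrder ι]
    [Nonempty ι] [TopologicalSpace α] {K : ι → Set α} (hK : Antitone K)
    (hcpt : ∀ i, IsCompact (K i)) (hcl : ∀ i, IsClosed (K i)) {a : α} (hKa : ⋂ i, K i ⊆ {a})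
    {x : ι → α} (hx : ∀ i, x i ∈ K i) : Tendsto x atTop (𝓝 a) := by
  intro U hU
  obtain ⟨i, hi⟩ := exists_subset_nhds_of_isCompact' hK.directed_ge hcpt hcl
    fun y hy => (hKa hy : y = a) ▸ hU
  exact mem_atTop_sets.2 ⟨i, fun j hij => hi (hK hij (hx j))⟩

namespace WeakDual

variable {𝕜 E : Type*} [NontriviallyNormedField 𝕜] [ProperSpace 𝕜] [SeminormedAddCommGroup E]
  [NormedSpace 𝕜 E]

theorem isCompact_closure_of_isBounded {s : Set (WeakDual 𝕜 E)} (hs : Bornology.IsBounded s) :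
    IsCompact (closure s) :=
  isCompact_of_bounded_of_closed (isBounded_closure hs) isClosed_closure

theorem isCompact_closure_image_toWeakDual {s : Set (StrongDual 𝕜 E)}
    (hs : Bornology.IsBounded s) : IsCompact (closure (StrongDual.toWeakDual '' s)) := by
  refine isCompact_closure_of_isBounded ?_
  rw [StrongDual.toWeakDual.image_eq_preimage_symm]
  exact hs

end WeakDual

theorem tendsto_of_iInter_eq_singleton_general
    {X : Type*} [NormedAddCommGroup X] [NormedSpace ℝ X]
    (C : ℕ → Set X)
    (hbdd : ∀ n, Bornology.IsBounded (C n))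
    (hnest : ∀ n, C (n + 1) ⊆ C n)
    (μ : StrongDual ℝ (StrongDual ℝ X))
    (hμ : (⋂ n, wClosure (⇑(inclusionInDoubleDual ℝ X) '' C n)) = {μ})
    (c : ℕ → X) (hc : ∀ n, c n ∈ C n) :
    Tendsto (fun n => StrongDual.toWeakDual (inclusionInDoubleDual ℝ X (c n))) atTop
      (𝓝 (StrongDual.toWeakDual μ)) := by
  have hJC : ∀ n, Bornology.IsBounded (inclusionInDoubleDual ℝ X '' C n) := fun n =>
    (inclusionInDoubleDualLi ℝ (E := X)).lipschitz.isBounded_image (hbdd n)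
  refine Antitone.tendsto_of_iInter_subset_singleton
    (K := fun n => closure (StrongDual.toWeakDual '' (inclusionInDoubleDual ℝ X '' C n)))
    (fun m n hmn => ?_) (fun n => ?_) (fun _ => isClosed_closure) (fun x hx => ?_)
    (fun n => subset_closure ⟨_, ⟨c n, hc n, rfl⟩, rfl⟩)
  · exact closure_mono (Set.image_mono (Set.image_mono (antitone_nat_of_succ_le hnest hmn)))
  · exact WeakDual.isCompact_closure_image_toWeakDual (hJC n)
  · have hx' : WeakDual.toStrongDual x ∈ ⋂ n, wClosure (inclusionInDoubleDual ℝ X '' C n) :=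
      Set.mem_iInter.2 (Set.mem_iInter.1 hx)
    rw [hμ] at hx'
    exact congrArg StrongDual.toWeakDual hx'

/-- If a nested sequence of nonempty bounded closed convex subsets of a Banach space `X` has
`⋂ₙ cl_{w*}(J(Cₙ)) = {μ}`, then any choice `cₙ ∈ Cₙ` gives a sequence with `J(cₙ) → μ` in the
weak* topology. -/
theorem tendsto_of_iInter_eq_singleton
    {X : Type*} [NormedAddCommGroup X] [NormedSpace ℝ X] [CompleteSpace X]
    (C : ℕ → Set X)
    (hne : ∀ n, (C n).Nonempty) (hbdd : ∀ n, Bornology.IsBounded (C n))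
    (hcl : ∀ n, IsClosed (C n)) (hconv : ∀ n, Convex ℝ (C n))
    (hnest : ∀ n, C (n + 1) ⊆ C n)
    (μ : StrongDual ℝ (StrongDual ℝ X))
    (hμ : (⋂ n, wClosure (⇑(inclusionInDoubleDual ℝ X) '' C n)) = {μ})
    (c : ℕ → X) (hc : ∀ n, c n ∈ C n) :
    Tendsto (fun n => StrongDual.toWeakDual (inclusionInDoubleDual ℝ X (c n))) atTop
      (𝓝 (StrongDual.toWeakDual μ)) :=
  tendsto_of_iInter_eq_singleton_general C hbdd hnest μ hμ c hc
end

section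
/- (Bernardes) Let X be a real Banach space whose dual X* is separable. Then every nonempty convex weak*-compact subset C of the bidual X** is representable: there exists a nested sequence (C_n) of nonempty bounded closed convex subsets of X such that C = ⋂_{n∈ℕ} cl_{w*}(J(C_n)). -/
/-!
By uniform boundedness `C` lies in a ball of radius `M`. Let `(f k)` be dense in `X*`, let `s k` be
the supremum of `f k` on `C`, and let `D n` be the `M`-ball of `X` cut by the half-spaces
`f k ≤ s k + 1/(n+1)`, `k ≤ n`. Every `F ∈ C` is a weak*-limit of points `J x` with `‖x‖ ≤ M`
(Goldstine), and because of the slack `1/(n+1)` the constraints defining `D n` hold strictly on a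
weak*-neighbourhood of `F`; hence `C ⊆ cl(J(D n))`. Conversely, a point `F` of every `cl(J(D n))`
satisfies `‖F‖ ≤ M` and `F (f k) ≤ s k` for all `k`. Since both sides are `M`-Lipschitz in the
functional, density gives `F φ ≤ sup_C φ` for every `φ ∈ X*`, and weak*-separation from the
weak*-closed convex set `C` puts `F` in `C`.
-/

open NormedSpace Filter Topology

open Metric

section CompactInWeakDual

variable {𝕜 E : Type*} [NontriviallyNormedField 𝕜] [NormedAddCommGroup E] [NormedSpace 𝕜 E]
  {C : Set (StrongDual 𝕜 E)}

theorem isBounded_of_isCompact_toWeakDual_image [CompleteSpace E]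
    (hcomp : IsCompact (StrongDual.toWeakDual '' C)) : Bornology.IsBounded C := by
  have := WeakDual.isBounded_iff_isVonNBounded.mpr (hcomp.isVonNBounded (𝕜 := 𝕜))
  rwa [← WeakDual.isBounded_toWeakDual_preimage_iff_isBounded,
    Set.preimage_image_eq _ StrongDual.toWeakDual.injective] at this

theorem isCompact_image_apply_of_isCompact_toWeakDual_image
    (hcomp : IsCompact (StrongDual.toWeakDual '' C)) (φ : E) :
    IsCompact ((fun G : StrongDual 𝕜 E => G φ) '' C) := by
  simpa [Set.image_image] using hcomp.image (WeakDual.eval_continuous φ)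

end CompactInWeakDual

section Separation

variable {E : Type*} [NormedAddCommGroup E] [NormedSpace ℝ E]

theorem WeakDual.exists_apply_lt_of_notMem {K : Set (WeakDual ℝ E)} (hconv : Convex ℝ K)
    (hclosed : IsClosed K) {F : WeakDual ℝ E} (hF : F ∉ K) :
    ∃ (φ : E) (u : ℝ), (∀ ψ ∈ K, ψ φ < u) ∧ u < F φ := by
  have : LocallyConvexSpace ℝ (WeakDual ℝ E) := (WeakDual.withSeminorms ℝ E).toLocallyConvexSpace
  obtain ⟨f, u, hK, hFu⟩ := geometric_hahn_banach_closed_point hconv hclosed hF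
  obtain ⟨φ, rfl⟩ := LinearMap.dualEmbedding_surjective (topDualPairing ℝ E) f
  exact ⟨φ, u, hK, hFu⟩

theorem Convex.toWeakDual_image {C : Set (StrongDual ℝ E)} (hconv : Convex ℝ C) :
    Convex ℝ (StrongDual.toWeakDual '' C) :=
  hconv.linear_image StrongDual.toWeakDual.toLinearMap

theorem mul_norm_le_of_forall_apply_le (φ : StrongDual ℝ E) {r u : ℝ} (hr : 0 ≤ r)
    (h : ∀ x ∈ closedBall (0 : E) r, φ x ≤ u) : r * ‖φ‖ ≤ u := by
  have hu : 0 ≤ u := by simpa using h 0 (mem_closedBall_self hr)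
  rcases hr.eq_or_lt with rfl | hr
  · simpa using hu
  have hφ : ‖φ‖ ≤ u / r := φ.opNorm_bound_of_ball_bound hr u fun z hz =>
    abs_le.2 ⟨neg_le.1 (by simpa using h (-z) (by simpa using hz)), h z hz⟩
  rwa [le_div_iff₀ hr, mul_comm] at hφ

theorem apply_le_apply_add_of_norm_le {G : StrongDual ℝ E} {M : ℝ} (hG : ‖G‖ ≤ M) (a b : E) :
    G a ≤ G b + M * ‖a - b‖ := by
  have := G.le_of_opNorm_le hG (a - b)
  rw [map_sub, Real.norm_eq_abs] at this
  linarith [le_abs_self (G a - G b)]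

variable {C : Set (StrongDual ℝ E)} {M : ℝ} {f : ℕ → E} {s : ℕ → ℝ} {F : StrongDual ℝ E}

theorem apply_le_of_apply_denseSeq_le (hCM : ∀ G ∈ C, ‖G‖ ≤ M) (hf : DenseRange f)
    (hs : ∀ k, IsLUB ((fun G : StrongDual ℝ E => G (f k)) '' C) (s k)) (hFM : ‖F‖ ≤ M)
    (hF : ∀ k, F (f k) ≤ s k) {φ : E} {u : ℝ}
    (hu : u ∈ upperBounds ((fun G : StrongDual ℝ E => G φ) '' C)) : F φ ≤ u := by
  have hM : 0 ≤ M := (norm_nonneg F).trans hFM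
  refine le_of_forall_pos_lt_add fun ε hε => ?_
  obtain ⟨k, hk⟩ := hf.exists_dist_lt φ (ε := ε / (2 * M + 1)) (by positivity)
  rw [dist_eq_norm, lt_div_iff₀ (by positivity)] at hk
  have hsk : s k ≤ u + M * ‖φ - f k‖ := (hs k).2 <| by
    rintro _ ⟨G, hG, rfl⟩
    have := apply_le_apply_add_of_norm_le (hCM G hG) (f k) φ
    rw [norm_sub_rev] at this
    linarith [hu ⟨G, hG, rfl⟩]
  calc F φ ≤ F (f k) + M * ‖φ - f k‖ := apply_le_apply_add_of_norm_le hFM φ (f k)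
    _ ≤ u + 2 * M * ‖φ - f k‖ := by linarith [hF k]
    _ < u + ε := by nlinarith [norm_nonneg (φ - f k)]

theorem mem_of_apply_denseSeq_le (hconv : Convex ℝ C)
    (hcomp : IsCompact (StrongDual.toWeakDual '' C)) (hCM : ∀ G ∈ C, ‖G‖ ≤ M)
    (hf : DenseRange f) (hs : ∀ k, IsLUB ((fun G : StrongDual ℝ E => G (f k)) '' C) (s k))
    (hFM : ‖F‖ ≤ M) (hF : ∀ k, F (f k) ≤ s k) : F ∈ C := by
  by_contra hFC
  obtain ⟨φ, u, hCu, huF⟩ := WeakDual.exists_apply_lt_of_notMem hconv.toWeakDual_image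
    hcomp.isClosed (StrongDual.toWeakDual.injective.mem_set_image.not.mpr hFC)
  refine huF.not_ge (apply_le_of_apply_denseSeq_le hCM hf hs hFM hF ?_)
  rintro _ ⟨G, hG, rfl⟩
  exact (hCu _ ⟨G, hG, rfl⟩).le

end Separation

section Bidual

variable {X : Type*} [NormedAddCommGroup X] [NormedSpace ℝ X]

theorem mem_wClosure_iff {S : Set (StrongDual ℝ (StrongDual ℝ X))}
    {F : StrongDual ℝ (StrongDual ℝ X)} :
    F ∈ wClosure S ↔ StrongDual.toWeakDual F ∈ closure (StrongDual.toWeakDual '' S) :=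
  Iff.rfl

theorem closedBall_subset_wClosure_image_closedBall (r : ℝ) :
    closedBall (0 : StrongDual ℝ (StrongDual ℝ X)) r ⊆
      wClosure (inclusionInDoubleDual ℝ X '' closedBall 0 r) := by
  intro F hF
  by_contra hFK
  have hconv := (((convex_closedBall (0 : X) r).linear_image
    (inclusionInDoubleDual ℝ X).toLinearMap).toWeakDual_image).closure
  obtain ⟨φ, u, hKu, huF⟩ := WeakDual.exists_apply_lt_of_notMem hconv isClosed_closure hFK
  have hφ : r * ‖φ‖ ≤ u := mul_norm_le_of_forall_apply_le φ (nonempty_closedBall.1 ⟨F, hF⟩)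
    fun x hx => (hKu _ (subset_closure ⟨_, ⟨x, hx, rfl⟩, rfl⟩)).le
  have hFφ : F φ ≤ r * ‖φ‖ :=
    (le_abs_self _).trans (F.le_of_opNorm_le (mem_closedBall_zero_iff.1 hF) φ)
  exact huF.not_ge (hFφ.trans hφ)

variable {S : Set X} {F : StrongDual ℝ (StrongDual ℝ X)}

theorem norm_le_of_mem_wClosure_image {M : ℝ} (hS : S ⊆ closedBall 0 M)
    (hF : F ∈ wClosure (inclusionInDoubleDual ℝ X '' S)) : ‖F‖ ≤ M := by
  have := closure_minimal (t := WeakDual.toStrongDual ⁻¹' closedBall 0 M) ?_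
    (WeakDual.isClosed_closedBall 0 M) hF
  · exact mem_closedBall_zero_iff.1 this
  rintro _ ⟨_, ⟨x, hx, rfl⟩, rfl⟩
  simpa using (double_dual_bound ℝ X x).trans (mem_closedBall_zero_iff.1 (hS hx))

theorem apply_le_of_mem_wClosure_image {φ : StrongDual ℝ X} {c : ℝ} (hS : ∀ x ∈ S, φ x ≤ c)
    (hF : F ∈ wClosure (inclusionInDoubleDual ℝ X '' S)) : F φ ≤ c := by
  refine closure_minimal (t := {ψ : WeakDual ℝ (StrongDual ℝ X) | ψ φ ≤ c}) ?_
    (isClosed_le (WeakDual.eval_continuous φ) continuous_const) hF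
  rintro _ ⟨_, ⟨x, hx, rfl⟩, rfl⟩
  exact hS x hx

end Bidual

section BallInterHalfspaces

variable {X : Type*} [NormedAddCommGroup X] [NormedSpace ℝ X]
  (M : ℝ) (f : ℕ → StrongDual ℝ X) (s : ℕ → ℝ)

def ballInterHalfspaces (n : ℕ) : Set X :=
  closedBall 0 M ∩ ⋂ k ∈ Finset.range (n + 1), {x | f k x ≤ s k + ((n : ℝ) + 1)⁻¹}

theorem isBounded_ballInterHalfspaces (n : ℕ) :
    Bornology.IsBounded (ballInterHalfspaces M f s n) :=
  isBounded_closedBall.subset Set.inter_subset_left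

theorem isClosed_ballInterHalfspaces (n : ℕ) : IsClosed (ballInterHalfspaces M f s n) :=
  isClosed_closedBall.inter <| isClosed_biInter fun k _ =>
    isClosed_le (f k).continuous continuous_const

theorem convex_ballInterHalfspaces (n : ℕ) : Convex ℝ (ballInterHalfspaces M f s n) :=
  (convex_closedBall 0 M).inter <| convex_iInter₂ fun k _ =>
    convex_halfSpace_le (f k).isLinear _

theorem ballInterHalfspaces_succ_subset (n : ℕ) :
    ballInterHalfspaces M f s (n + 1) ⊆ ballInterHalfspaces M f s n := by
  refine Set.inter_subset_inter_right _ fun x hx => ?_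
  simp only [Set.mem_iInter, Finset.mem_range, Set.mem_ofPred_eq] at hx ⊢
  intro k hk
  have : ((n + 1 : ℕ) + 1 : ℝ)⁻¹ ≤ ((n : ℝ) + 1)⁻¹ := by gcongr; simp
  linarith [hx k (by omega)]

variable {M f s}

theorem subset_wClosure_image_ballInterHalfspaces {C : Set (StrongDual ℝ (StrongDual ℝ X))}
    (hCM : ∀ G ∈ C, ‖G‖ ≤ M) (hCs : ∀ k, ∀ G ∈ C, G (f k) ≤ s k) (n : ℕ) :
    C ⊆ wClosure (inclusionInDoubleDual ℝ X '' ballInterHalfspaces M f s n) := by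
  intro F hF
  set U : Set (WeakDual ℝ (StrongDual ℝ X)) :=
    ⋂ k ∈ Finset.range (n + 1), {ψ | ψ (f k) < s k + ((n : ℝ) + 1)⁻¹}
  have hU : IsOpen U := isOpen_biInter_finset fun k _ =>
    isOpen_lt (WeakDual.eval_continuous _) continuous_const
  have hFU : StrongDual.toWeakDual F ∈ U := by
    simp only [U, Set.mem_iInter, Set.mem_ofPred_eq]
    intro k _
    exact (hCs k F hF).trans_lt (lt_add_of_pos_right _ (by positivity))
  have hFUball : StrongDual.toWeakDual F ∈
      U ∩ closure (StrongDual.toWeakDual '' (inclusionInDoubleDual ℝ X '' closedBall 0 M)) :=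
    ⟨hFU, closedBall_subset_wClosure_image_closedBall M
      ((mem_closedBall_zero_iff (E := StrongDual ℝ (StrongDual ℝ X))).2 (hCM F hF))⟩
  rw [mem_wClosure_iff]
  refine closure_mono ?_ (hU.inter_closure hFUball)
  rintro _ ⟨hxU, _, ⟨x, hx, rfl⟩, rfl⟩
  refine ⟨_, ⟨x, ⟨hx, ?_⟩, rfl⟩, rfl⟩
  simp only [U, Set.mem_iInter, Set.mem_ofPred_eq] at hxU ⊢
  exact fun k hk => (hxU k hk).le

theorem norm_le_and_apply_le_of_mem_iInter_wClosure {F : StrongDual ℝ (StrongDual ℝ X)}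
    (hF : F ∈ ⋂ n, wClosure (inclusionInDoubleDual ℝ X '' ballInterHalfspaces M f s n)) :
    ‖F‖ ≤ M ∧ ∀ k, F (f k) ≤ s k := by
  rw [Set.mem_iInter] at hF
  refine ⟨norm_le_of_mem_wClosure_image Set.inter_subset_left (hF 0), fun k => ?_⟩
  have hFn : ∀ n ≥ k, F (f k) ≤ s k + ((n : ℝ) + 1)⁻¹ := fun n hn =>
    apply_le_of_mem_wClosure_image (fun x hx => by
      simp only [ballInterHalfspaces, Set.mem_inter_iff, Set.mem_iInter, Finset.mem_range] at hx
      exact hx.2 k (by omega)) (hF n)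
  refine le_of_forall_pos_lt_add fun ε hε => ?_
  obtain ⟨m, hm⟩ := exists_nat_one_div_lt hε
  have : ((max k m : ℕ) + 1 : ℝ)⁻¹ ≤ 1 / ((m : ℝ) + 1) := by
    rw [one_div]; gcongr; exact_mod_cast le_max_right k m
  linarith [hFn (max k m) (le_max_left k m)]

end BallInterHalfspaces

theorem representable_of_separable_dual_general
    {X : Type*} [NormedAddCommGroup X] [NormedSpace ℝ X]
    [TopologicalSpace.SeparableSpace (StrongDual ℝ X)]
    (C : Set (StrongDual ℝ (StrongDual ℝ X)))
    (hne : C.Nonempty) (hconv : Convex ℝ C)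
    (hcomp : IsCompact (⇑StrongDual.toWeakDual '' C)) :
    ∃ D : ℕ → Set X,
      (∀ n, (D n).Nonempty) ∧ (∀ n, Bornology.IsBounded (D n)) ∧
      (∀ n, IsClosed (D n)) ∧ (∀ n, Convex ℝ (D n)) ∧ (∀ n, D (n + 1) ⊆ D n) ∧
      C = ⋂ n, wClosure (⇑(inclusionInDoubleDual ℝ X) '' D n) := by
  obtain ⟨M, hCM⟩ := isBounded_iff_forall_norm_le.1 (isBounded_of_isCompact_toWeakDual_image hcomp)
  obtain ⟨f, hf⟩ := TopologicalSpace.exists_dense_seq (StrongDual ℝ X)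
  have hLUB : ∀ k, ∃ t, IsLUB ((fun G : StrongDual ℝ (StrongDual ℝ X) => G (f k)) '' C) t :=
    fun k => ⟨_, (isCompact_image_apply_of_isCompact_toWeakDual_image hcomp (f k)).isLUB_sSup
      (hne.image _)⟩
  choose s hs using hLUB
  have hCD := subset_wClosure_image_ballInterHalfspaces hCM fun k G hG => (hs k).1 ⟨G, hG, rfl⟩
  refine ⟨ballInterHalfspaces M f s, fun n => ?_, isBounded_ballInterHalfspaces M f s,
    isClosed_ballInterHalfspaces M f s, convex_ballInterHalfspaces M f s,
    ballInterHalfspaces_succ_subset M f s, (Set.subset_iInter hCD).antisymm fun F hF => ?_⟩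
  · obtain ⟨G, hG⟩ := hne
    exact (closure_nonempty_iff.1 ⟨_, Set.mem_preimage.1 (hCD n hG)⟩).of_image.of_image
  · obtain ⟨hFM, hFs⟩ := norm_le_and_apply_le_of_mem_iInter_wClosure hF
    exact mem_of_apply_denseSeq_le hconv hcomp hCM hf hs hFM hFs

/-- (Bernardes) If the dual of a Banach space `X` is separable, then every nonempty convex
weak*-compact subset of `X**` is representable via a nested sequence of nonempty bounded closed
convex subsets of `X`. -/
theorem representable_of_separable_dual
    {X : Type*} [NormedAddCommGroup X] [NormedSpace ℝ X] [CompleteSpace X]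
    [TopologicalSpace.SeparableSpace (StrongDual ℝ X)]
    (C : Set (StrongDual ℝ (StrongDual ℝ X)))
    (hne : C.Nonempty) (hconv : Convex ℝ C)
    (hcomp : IsCompact (⇑StrongDual.toWeakDual '' C)) :
    ∃ D : ℕ → Set X,
      (∀ n, (D n).Nonempty) ∧ (∀ n, Bornology.IsBounded (D n)) ∧
      (∀ n, IsClosed (D n)) ∧ (∀ n, Convex ℝ (D n)) ∧ (∀ n, D (n + 1) ⊆ D n) ∧
      C = ⋂ n, wClosure (⇑(inclusionInDoubleDual ℝ X) '' D n) :=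
  representable_of_separable_dual_general C hne hconv hcomp
end

section
/- Let X be a real Banach space and let (C_n) be a nested sequence of nonempty bounded closed convex subsets of X. Suppose the set K = ⋂_{n∈ℕ} cl_{w*}(J(C_n)) ⊆ X** is metrizable in the subspace topology induced by the weak* topology of X**. Then every g ∈ K is the weak*-limit of a sequence (J(c_n)) with c_n ∈ C_n for every n. -/
/-!
The sets `Dₙ = cl_{w*} J(Cₙ)` are weak*-compact by Banach–Alaoglu and decrease to `K`. Since `K` is
first countable at `g`, there are closed weak*-neighbourhoods `Tₙ` of `g`, decreasing in `n`, with
`K ∩ ⋂ₙ Tₙ = {g}`. Pick `J(cₙ) ∈ Tₙ` with `cₙ ∈ Cₙ`. The compact sets `Dₙ ∩ Tₙ` decrease to `{g}`,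
so each neighbourhood of `g` contains one of them, and hence all but finitely many `J(cₙ)`.
-/

open NormedSpace Filter Topology

section Topology

variable {Y : Type*} [TopologicalSpace Y]

theorem isCountablyGenerated_nhdsWithin_of_mem {s : Set Y} [FirstCountableTopology s] {a : Y}
    (ha : a ∈ s) : (𝓝[s] a).IsCountablyGenerated := by
  rw [nhdsWithin_eq_map_subtype_coe ha]
  infer_instance

theorem tendsto_of_antitone_isCompact_of_iInter_subset [T2Space Y] {E : ℕ → Set Y}
    (hE : Antitone E) (hc : ∀ n, IsCompact (E n)) {g : Y} (hg : ⋂ n, E n ⊆ {g})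
    {x : ℕ → Y} (hx : ∀ n, x n ∈ E n) : Tendsto x atTop (𝓝 g) := by
  intro U hU
  obtain ⟨m, hm⟩ := exists_subset_nhds_of_isCompact' hE.directed_ge hc (fun n => (hc n).isClosed)
    (U := U) fun y hy => (hg hy : y = g) ▸ hU
  exact mem_atTop_sets.2 ⟨m, fun k hk => hm (hE hk (hx k))⟩

theorem exists_antitone_isClosed_nhds_inter_iInter_subset [RegularSpace Y] [T1Space Y]
    (K : Set Y) (g : Y) [(𝓝[K] g).IsCountablyGenerated] :
    ∃ T : ℕ → Set Y, Antitone T ∧ (∀ n, T n ∈ 𝓝 g) ∧ (∀ n, IsClosed (T n)) ∧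
      K ∩ ⋂ n, T n ⊆ {g} := by
  obtain ⟨F, hF, hbasis⟩ :=
    (nhdsWithin_hasBasis (closed_nhds_basis g) K).exists_antitone_subbasis
  -- Only the traces `F n ∩ K` decrease; partial intersections make the `F n` themselves decrease.
  refine ⟨fun n => ⋂ k ∈ Set.Iic n, F k,
    fun m n hmn => Set.biInter_subset_biInter_left fun k hk => le_trans hk hmn,
    fun n => (biInter_mem (Set.finite_Iic n)).2 fun k _ => (hF k).1,
    fun n => isClosed_biInter fun k _ => (hF k).2, ?_⟩
  rintro y ⟨hyK, hyT⟩
  have hyF : ∀ n, y ∈ F n := fun n =>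
    Set.mem_iInter₂.1 (Set.mem_iInter.1 hyT n) n (Set.mem_Iic.2 le_rfl)
  have hy : pure y ≤ 𝓝[K] g := fun U hU => by
    obtain ⟨n, hn⟩ := hbasis.mem_iff.1 hU
    exact hn ⟨hyF n, hyK⟩
  exact pure_le_nhds_iff.1 (hy.trans nhdsWithin_le_nhds)

theorem exists_seq_mem_tendsto_of_antitone_of_isCompact_closure [RegularSpace Y] [T2Space Y]
    {S : ℕ → Set Y} (hS : Antitone S) (hc : ∀ n, IsCompact (closure (S n))) {g : Y}
    (hg : ∀ n, g ∈ closure (S n)) [(𝓝[⋂ n, closure (S n)] g).IsCountablyGenerated] :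
    ∃ x : ℕ → Y, (∀ n, x n ∈ S n) ∧ Tendsto x atTop (𝓝 g) := by
  obtain ⟨T, hT, hTg, hTc, hKT⟩ :=
    exists_antitone_isClosed_nhds_inter_iInter_subset (⋂ n, closure (S n)) g
  have hST : ∀ n, ∃ x ∈ S n, x ∈ T n := fun n =>
    (mem_closure_iff_nhds.1 (hg n) _ (hTg n)).imp fun x hx => ⟨hx.2, hx.1⟩
  choose x hxS hxT using hST
  refine ⟨x, hxS, tendsto_of_antitone_isCompact_of_iInter_subset
    (E := fun n => closure (S n) ∩ T n)
    (fun m n h => Set.inter_subset_inter (closure_mono (hS h)) (hT h))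
    (fun n => (hc n).inter_right (hTc n)) ?_ fun n => ⟨subset_closure (hxS n), hxT n⟩⟩
  rw [Set.iInter_inter_distrib]
  exact hKT

end Topology

theorem isCompact_closure_toWeakDual_inclusionInDoubleDual_image {𝕜 E : Type*}
    [NontriviallyNormedField 𝕜] [ProperSpace 𝕜] [NormedAddCommGroup E] [NormedSpace 𝕜 E]
    {s : Set E} (hs : Bornology.IsBounded s) :
    IsCompact (closure (StrongDual.toWeakDual '' (inclusionInDoubleDual 𝕜 E '' s))) := by
  obtain ⟨R, hR⟩ := isBounded_iff_forall_norm_le.1 hs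
  have hJs : Bornology.IsBounded (inclusionInDoubleDual 𝕜 E '' s) := by
    refine isBounded_iff_forall_norm_le.2 ⟨R, ?_⟩
    rintro _ ⟨x, hx, rfl⟩
    exact (double_dual_bound 𝕜 E x).trans (hR x hx)
  refine WeakDual.isCompact_of_bounded_of_closed (WeakDual.isBounded_closure ?_) isClosed_closure
  rw [LinearEquiv.image_eq_preimage_symm]
  exact hJs

theorem mem_iInter_is_weakStar_limit_of_metrizable_general
    {X : Type*} [NormedAddCommGroup X] [NormedSpace ℝ X]
    (C : ℕ → Set X)
    (hbdd : ∀ n, Bornology.IsBounded (C n))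
    (hnest : ∀ n, C (n + 1) ⊆ C n)
    (K : Set (StrongDual ℝ (StrongDual ℝ X)))
    (hK : K = ⋂ n, wClosure (⇑(inclusionInDoubleDual ℝ X) '' C n))
    (hmetr : TopologicalSpace.MetrizableSpace (⇑StrongDual.toWeakDual '' K)) :
    ∀ g ∈ K, ∃ c : ℕ → X, (∀ n, c n ∈ C n) ∧
      Tendsto (fun n => StrongDual.toWeakDual (inclusionInDoubleDual ℝ X (c n))) atTop
        (𝓝 (StrongDual.toWeakDual g)) := by
  intro g hg
  set S : ℕ → Set (WeakDual ℝ (StrongDual ℝ X)) :=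
    fun n => StrongDual.toWeakDual '' (inclusionInDoubleDual ℝ X '' C n)
  have hKS : StrongDual.toWeakDual '' K = ⋂ n, closure (S n) := by
    simp only [hK, wClosure, Set.image_iInter StrongDual.toWeakDual.bijective,
      Set.image_preimage_eq _ StrongDual.toWeakDual.surjective, S]
  have hgK : StrongDual.toWeakDual g ∈ StrongDual.toWeakDual '' K := Set.mem_image_of_mem _ hg
  have := isCountablyGenerated_nhdsWithin_of_mem hgK
  rw [hKS] at hgK this
  obtain ⟨x, hxS, hx⟩ := exists_seq_mem_tendsto_of_antitone_of_isCompact_closure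
    (fun m n hmn => Set.image_mono (Set.image_mono (antitone_nat_of_succ_le hnest hmn)))
    (fun n => isCompact_closure_toWeakDual_inclusionInDoubleDual_image (hbdd n))
    (Set.mem_iInter.1 hgK)
  have hxC : ∀ n, ∃ c ∈ C n, StrongDual.toWeakDual (inclusionInDoubleDual ℝ X c) = x n := by
    intro n
    obtain ⟨_, ⟨c, hc, rfl⟩, hcx⟩ := hxS n
    exact ⟨c, hc, hcx⟩
  choose c hc hcx using hxC
  exact ⟨c, hc, by simpa only [hcx] using hx⟩

/-- If the intersection `K = ⋂ₙ cl_{w*}(J(Cₙ))` of a nested sequence of nonempty bounded closed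
convex subsets of a Banach space `X` is weak*-metrizable, then every `g ∈ K` is the weak*-limit
of a sequence `(J(cₙ))` with `cₙ ∈ Cₙ`. -/
theorem mem_iInter_is_weakStar_limit_of_metrizable
    {X : Type*} [NormedAddCommGroup X] [NormedSpace ℝ X] [CompleteSpace X]
    (C : ℕ → Set X)
    (hne : ∀ n, (C n).Nonempty) (hbdd : ∀ n, Bornology.IsBounded (C n))
    (hcl : ∀ n, IsClosed (C n)) (hconv : ∀ n, Convex ℝ (C n))
    (hnest : ∀ n, C (n + 1) ⊆ C n)
    (K : Set (StrongDual ℝ (StrongDual ℝ X)))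
    (hK : K = ⋂ n, wClosure (⇑(inclusionInDoubleDual ℝ X) '' C n))
    (hmetr : TopologicalSpace.MetrizableSpace (⇑StrongDual.toWeakDual '' K)) :
    ∀ g ∈ K, ∃ c : ℕ → X, (∀ n, c n ∈ C n) ∧
      Tendsto (fun n => StrongDual.toWeakDual (inclusionInDoubleDual ℝ X (c n))) atTop
        (𝓝 (StrongDual.toWeakDual g)) :=
  mem_iInter_is_weakStar_limit_of_metrizable_general C hbdd hnest K hK hmetr
end

section
/- Let X be a finite-dimensional real normed space and let (A_n)_{n∈ℕ} be a sequence of unbounded connected subsets of X. Then either ⋂_{n∈ℕ} A_n = ∅, or there is k₀ ∈ ℕ such that for every k ≥ k₀ and every ε > 0 there exists an infinite subset N_k ⊆ ℕ with T_k ∩ ⋂_{n∈N_k} A_n^ε ≠ ∅, where T_k = {x ∈ X : k ≤ ‖x‖ ≤ k+1}. -/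
/-! Let `x₀` be a common point of the `Aₙ` and `k ≥ ‖x₀‖`. Each `Aₙ` is connected, contains `x₀`
and has points of norm above `k`, so it meets the sphere of radius `k`. That sphere is compact,
hence the chosen points `aₙ` accumulate at some `x` on it, and `x` lies within `ε` of infinitely
many `Aₙ`. -/

open Metric

/-- The `ε`-enlargement of a set `A`: points at distance at most `ε` from `A`. -/
def enl {X : Type*} [NormedAddCommGroup X] (A : Set X) (ε : ℝ) : Set X :=
  {x : X | infDist x A ≤ ε}

open Filter

theorem IsPreconnected.exists_norm_eq_of_not_isBounded {E : Type*} [SeminormedAddGroup E]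
    {s : Set E} (hs : IsPreconnected s) {x₀ : E} (hx₀ : x₀ ∈ s) {r : ℝ} (hr : ‖x₀‖ ≤ r)
    (hunb : ¬ Bornology.IsBounded s) : ∃ a ∈ s, ‖a‖ = r := by
  obtain ⟨b, hb, hrb⟩ : ∃ b ∈ s, r < ‖b‖ := by
    by_contra! h
    exact hunb (isBounded_iff_forall_norm_le.2 ⟨r, h⟩)
  exact hs.intermediate_value hx₀ hb continuous_norm.continuousOn ⟨hr, hrb.le⟩

theorem IsCompact.exists_infinite_setOf_dist_le {α : Type*} [PseudoMetricSpace α] {s : Set α}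
    (hs : IsCompact s) {a : ℕ → α} (ha : ∀ n, a n ∈ s) {ε : ℝ} (hε : 0 < ε) :
    ∃ x ∈ s, {n | dist (a n) x ≤ ε}.Infinite := by
  obtain ⟨x, hx, hclust⟩ := hs.exists_mapClusterPt (f := atTop) (tendsto_principal.2 (.of_forall ha))
  exact ⟨x, hx, Nat.frequently_atTop_iff_infinite.1 <|
    mapClusterPt_iff_frequently.1 hclust _ (closedBall_mem_nhds x hε)⟩

theorem mem_enl_of_dist_le {X : Type*} [NormedAddCommGroup X] {A : Set X} {a x : X} {ε : ℝ}
    (ha : a ∈ A) (hxa : dist a x ≤ ε) : x ∈ enl A ε :=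
  (infDist_le_dist_of_mem ha).trans (dist_comm x a ▸ hxa)

/-- For a sequence of unbounded connected sets `(Aₙ)` in a finite-dimensional normed space,
either `⋂ₙ Aₙ = ∅`, or for all but finitely many `k` and every `ε > 0` there is an infinite
`N ⊆ ℕ` such that the annulus `T_k = {k ≤ ‖x‖ ≤ k+1}` meets `⋂_{n ∈ N} Aₙ^ε`. -/
theorem annulus_meets_enlargements_of_unbounded_connected
    {X : Type*} [NormedAddCommGroup X] [NormedSpace ℝ X] [FiniteDimensional ℝ X]
    (A : ℕ → Set X) (hconn : ∀ n, IsConnected (A n))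
    (hunb : ∀ n, ¬ Bornology.IsBounded (A n)) :
    (⋂ n, A n) = ∅ ∨
      ∃ k₀ : ℕ, ∀ k : ℕ, k₀ ≤ k → ∀ ε : ℝ, 0 < ε →
        ∃ N : Set ℕ, N.Infinite ∧
          ({x : X | (k : ℝ) ≤ ‖x‖ ∧ ‖x‖ ≤ (k : ℝ) + 1} ∩ ⋂ n ∈ N, enl (A n) ε).Nonempty := by
  rcases Set.eq_empty_or_nonempty (⋂ n, A n) with h | ⟨x₀, hx₀⟩
  · exact Or.inl h
  rw [Set.mem_iInter] at hx₀
  refine Or.inr ⟨⌈‖x₀‖⌉₊, fun k hk ε hε => ?_⟩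
  choose a ha hak using fun n => (hconn n).isPreconnected.exists_norm_eq_of_not_isBounded
    (hx₀ n) (Nat.ceil_le.1 hk) (hunb n)
  obtain ⟨x, hx, hinf⟩ := (isCompact_sphere (0 : X) k).exists_infinite_setOf_dist_le
    (fun n => mem_sphere_zero_iff_norm.2 (hak n)) hε
  rw [mem_sphere_zero_iff_norm] at hx
  refine ⟨_, hinf, x, ⟨hx.ge, by linarith⟩, Set.mem_iInter₂.2 fun n hn => ?_⟩
  exact mem_enl_of_dist_le (ha n) hn
end

section
/- Let X be a finite-dimensional real normed space and let (A_n)_{n∈ℕ} be a nested sequence (A_{n+1} ⊆ A_n for all n) of unbounded connected subsets of X. Then either ⋂_{n∈ℕ} A_n = ∅, or for every ε > 0 the set ⋂_{n∈ℕ} A_n^ε is unbounded. -/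
open Metric

/-!
Fix `x ∈ ⋂ₙ Aₙ` and `r ≥ 0`. Each `Aₙ` is connected, contains `x` and is unbounded, so by the
intermediate value theorem applied to `dist · x` it meets the sphere `S(x, r)`. The sets
`closure Aₙ ∩ S(x, r)` are then a decreasing sequence of nonempty compact sets (spheres are compact
in finite dimension), so by Cantor's intersection theorem `⋂ₙ closure Aₙ` meets every sphere
around `x`, hence is unbounded; and it lies inside `⋂ₙ Aₙ^ε`.
-/

open Set Bornology

theorem IsPreconnected.inter_sphere_nonempty_of_not_isBounded {X : Type*} [PseudoMetricSpace X]
    {s : Set X} (hs : IsPreconnected s) {x : X} (hx : x ∈ s) (hunb : ¬IsBounded s)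
    {r : ℝ} (hr : 0 ≤ r) : (s ∩ sphere x r).Nonempty := by
  obtain ⟨y, hy, hry⟩ : ∃ y ∈ s, r < dist y x := by
    by_contra! h
    exact hunb (isBounded_closedBall.subset fun y hy => mem_closedBall.mpr (h y hy))
  obtain ⟨z, hz, hzr⟩ :=
    hs.intermediate_value hx hy (continuous_id.dist continuous_const).continuousOn
      ⟨by simpa using hr, hry.le⟩
  exact ⟨z, hz, hzr⟩

theorem IsCompact.iInter_closure_inter_nonempty {X : Type*} [TopologicalSpace X] [T2Space X]
    {K : Set X} (hK : IsCompact K) {A : ℕ → Set X} (hA : ∀ n, A (n + 1) ⊆ A n)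
    (h : ∀ n, (A n ∩ K).Nonempty) : ((⋂ n, closure (A n)) ∩ K).Nonempty := by
  rw [iInter_inter]
  exact IsCompact.nonempty_iInter_of_sequence_nonempty_isCompact_isClosed _
    (fun n => inter_subset_inter_left _ (closure_mono (hA n)))
    (fun n => (h n).mono (inter_subset_inter_left _ subset_closure))
    (hK.inter_left isClosed_closure) (fun n => isClosed_closure.inter hK.isClosed)

theorem not_isBounded_of_forall_inter_sphere_nonempty {X : Type*} [PseudoMetricSpace X]
    {s : Set X} {x : X} (h : ∀ r, 0 ≤ r → (s ∩ sphere x r).Nonempty) : ¬IsBounded s := by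
  intro hs
  obtain ⟨R, hR⟩ := hs.subset_closedBall x
  obtain ⟨y, hys, hyr⟩ := h (|R| + 1) (by positivity)
  have := mem_closedBall.mp (hR hys)
  rw [mem_sphere.mp hyr] at this
  linarith [le_abs_self R]

theorem closure_subset_enl {X : Type*} [NormedAddCommGroup X] (A : Set X) {ε : ℝ} (hε : 0 ≤ ε) :
    closure A ⊆ enl A ε := fun _ hx => (infDist_zero_of_mem_closure hx).trans_le hε

/-- For a nested sequence of unbounded connected sets `(Aₙ)` in a finite-dimensional normed
space, either `⋂ₙ Aₙ = ∅`, or `⋂ₙ Aₙ^ε` is unbounded for every `ε > 0`. -/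
theorem iInter_enlargement_unbounded_of_nested_unbounded_connected
    {X : Type*} [NormedAddCommGroup X] [NormedSpace ℝ X] [FiniteDimensional ℝ X]
    (A : ℕ → Set X) (hconn : ∀ n, IsConnected (A n))
    (hunb : ∀ n, ¬ Bornology.IsBounded (A n))
    (hnest : ∀ n, A (n + 1) ⊆ A n) :
    (⋂ n, A n) = ∅ ∨
      ∀ ε : ℝ, 0 < ε → ¬ Bornology.IsBounded (⋂ n, enl (A n) ε) := by
  refine (eq_empty_or_nonempty _).imp id fun ⟨x, hx⟩ ε hε => ?_
  have hsphere : ∀ r, 0 ≤ r → ((⋂ n, closure (A n)) ∩ sphere x r).Nonempty := fun r hr =>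
    (isCompact_sphere x r).iInter_closure_inter_nonempty hnest fun n =>
      (hconn n).isPreconnected.inter_sphere_nonempty_of_not_isBounded (mem_iInter.mp hx n)
        (hunb n) hr
  exact fun hb => not_isBounded_of_forall_inter_sphere_nonempty hsphere
    (hb.subset (iInter_mono fun n => closure_subset_enl (A n) hε.le))
end

section
/- In the real space ℓ¹ = ℓ¹({k∈ℕ : k ≥ 1};ℝ), for each integer k ≥ 1 define B_k = {x ∈ ℓ¹ : x_k ≥ 1} and D_k = {x ∈ ℓ¹ : x_k ≤ −(2^k − 1)/2^k}. Then for every ε with 0 ≤ ε < 1, the intersection of all the ε-enlargements, (⋂_{k≥1} B_k^ε) ∩ (⋂_{k≥1} D_k^ε), is empty; in particular (⋂_{k≥1} B_k) ∩ (⋂_{k≥1} D_k) = ∅. -/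
/-!
A point `x` in the `ε`-enlargements of both `B_k` and `D_k` satisfies `1 - ε ≤ x_k` and
`x_k ≤ ε - (1 - 2⁻ᵏ)`, because the `k`-th coordinate is `1`-Lipschitz on `ℓ¹`. Hence
`2 - 2⁻ᵏ ≤ 2ε` for every `k`, which forces `ε ≥ 1`.
-/

open Metric

section Enlargement

variable {X : Type*} [NormedAddCommGroup X]

lemma subset_enl {A : Set X} {ε : ℝ} (hε : 0 ≤ ε) : A ⊆ enl A ε :=
  fun _ hx => (infDist_zero_of_mem hx).trans_le hε

lemma LipschitzWith.sub_le_of_mem_enl {f : X → ℝ} (hf : LipschitzWith 1 f) {A : Set X}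
    (hA : A.Nonempty) {a ε : ℝ} (hfA : ∀ y ∈ A, a ≤ f y) {x : X} (hx : x ∈ enl A ε) :
    a - ε ≤ f x := by
  have hdist : a - f x ≤ infDist x A := (le_infDist hA).2 fun y hy => by
    have := hf.le_add_mul y x
    rw [NNReal.coe_one, one_mul, dist_comm] at this
    linarith [hfA y hy]
  exact sub_le_comm.1 (hdist.trans hx)

end Enlargement

lemma one_le_of_forall_two_sub_half_pow_le {ε : ℝ}
    (h : ∀ k : ℕ+, 2 - (1 / 2) ^ (k : ℕ) ≤ 2 * ε) : 1 ≤ ε := by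
  have hlim :
      Filter.Tendsto (fun n : ℕ => 2 - (1 / 2 : ℝ) ^ (n + 1)) Filter.atTop (nhds 2) := by
    simpa using (tendsto_pow_atTop_nhds_zero_of_lt_one (by norm_num : (0 : ℝ) ≤ 1 / 2)
      (by norm_num)).comp (Filter.tendsto_add_atTop_nat 1) |>.const_sub 2
  have : 2 ≤ 2 * ε := le_of_tendsto' hlim fun n => h ⟨n + 1, n.succ_pos⟩
  linarith

/-- In `ℓ¹` (indexed by the positive integers), with `B_k = {x : x_k ≥ 1}` and
`D_k = {x : x_k ≤ -(2^k - 1)/2^k}`, for every `0 ≤ ε < 1` the intersection of all the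
`ε`-enlargements is empty; in particular `(⋂ₖ B_k) ∩ (⋂ₖ D_k) = ∅`. -/
theorem l1_example_enlargements_empty_inter :
    let B : ℕ+ → Set (lp (fun _ : ℕ+ => ℝ) 1) := fun k => {x | 1 ≤ x k}
    let D : ℕ+ → Set (lp (fun _ : ℕ+ => ℝ) 1) :=
      fun k => {x | x k ≤ -((2 ^ (k : ℕ) - 1) / 2 ^ (k : ℕ))}
    (∀ ε : ℝ, 0 ≤ ε → ε < 1 →
      ((⋂ k, enl (B k) ε) ∩ ⋂ k, enl (D k) ε) = ∅) ∧
    ((⋂ k, B k) ∩ ⋂ k, D k) = ∅ := by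
  intro B D
  have main (ε : ℝ) (hε : ε < 1) : ((⋂ k, enl (B k) ε) ∩ ⋂ k, enl (D k) ε) = ∅ := by
    refine Set.eq_empty_of_forall_notMem fun x ⟨hB, hD⟩ => hε.not_ge ?_
    refine one_le_of_forall_two_sub_half_pow_le fun k => ?_
    have heval := lp.lipschitzWith_one_eval (E := fun _ : ℕ+ => ℝ) 1 k
    have hxB : 1 - ε ≤ x k :=
      heval.sub_le_of_mem_enl
        ⟨lp.single 1 k 1, (lp.single_apply_self (E := fun _ => ℝ) 1 k 1).ge⟩
        (fun y hy => hy) (Set.mem_iInter.1 hB k)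
    have hxD : (2 ^ (k : ℕ) - 1) / 2 ^ (k : ℕ) - ε ≤ -x k :=
      heval.neg.sub_le_of_mem_enl
        ⟨lp.single 1 k _, (lp.single_apply_self (E := fun _ => ℝ) 1 k _).le⟩
        (fun y hy => le_neg_of_le_neg hy) (Set.mem_iInter.1 hD k)
    have hc : ((2 : ℝ) ^ (k : ℕ) - 1) / 2 ^ (k : ℕ) = 1 - (1 / 2) ^ (k : ℕ) := by
      rw [one_div_pow, sub_div, div_self (by positivity), one_div]
    linarith
  refine ⟨fun ε _ hε => main ε hε, Set.subset_eq_empty ?_ (main 0 one_pos)⟩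
  exact Set.inter_subset_inter (Set.iInter_mono fun k => subset_enl le_rfl)
    (Set.iInter_mono fun k => subset_enl le_rfl)
end

section
/- In the real space ℓ¹ = ℓ¹({k∈ℕ : k ≥ 1};ℝ), for each integer k ≥ 1 define B_k = {x ∈ ℓ¹ : x_k ≥ 1} and D_k = {x ∈ ℓ¹ : x_k ≤ −(2^k − 1)/2^k}. Then for every ε > 0 the set (⋂_{k≥1} B_k^{1+ε}) ∩ (⋂_{k≥1} D_k^{1+ε}) is unbounded; indeed it contains every x ∈ ℓ¹ with −ε ≤ x_k ≤ 0 for all k ≥ 1. -/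
/-! Moving a single coordinate of `x` to `c` costs `‖c - x k‖` in any `ℓᵖ`, so a point whose
coordinates lie in `[-ε, 0]` is within `1 + ε` of every set `{y | y k = c}` with `c ∈ [-1, 1]`;
the levels `1` and `-(2^k - 1)/2^k` of `B_k` and `D_k` are of this kind. Such points include
the vectors with `n` coordinates equal to `-ε`, of norm `n ε`, which is unbounded in `ℓ¹`
because the index set is infinite. -/

open Metric

open scoped ENNReal

theorem abs_sub_le_one_add_of_mem_Icc {a c ε : ℝ} (hc : c ∈ Set.Icc (-1) 1)
    (ha : a ∈ Set.Icc (-ε) 0) : |c - a| ≤ 1 + ε := by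
  rw [abs_le]
  constructor <;> linarith [hc.1, hc.2, ha.1, ha.2]

namespace lp

variable {α : Type*} {E : α → Type*} [∀ i, NormedAddCommGroup (E i)]

theorem infDist_le_norm_sub_apply {p : ℝ≥0∞} [Fact (1 ≤ p)] {S : Set (lp E p)} {i : α}
    {c : E i} (hS : ∀ y : lp E p, y i = c → y ∈ S) (x : lp E p) :
    infDist x S ≤ ‖c - x i‖ := by
  classical
  have hmem : x + lp.single p i (c - x i) ∈ S := hS _ (by simp)
  calc infDist x S ≤ dist x (x + lp.single p i (c - x i)) := infDist_le_dist_of_mem hmem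
    _ = ‖c - x i‖ := by
      rw [dist_eq_norm, sub_add_cancel_left, norm_neg,
        lp.norm_single (zero_lt_one.trans_le Fact.out)]

theorem norm_sum_single_one [DecidableEq α] (f : ∀ i, E i) (s : Finset α) :
    ‖∑ i ∈ s, lp.single 1 i (f i)‖ = ∑ i ∈ s, ‖f i‖ := by
  simpa using lp.norm_sum_single (p := 1) (by simp) f s

theorem not_isBounded_of_forall_apply_mem_Icc {ι : Type*} [Infinite ι] {ε : ℝ} (hε : 0 < ε)
    {S : Set (lp (fun _ : ι => ℝ) 1)}
    (hS : ∀ x : lp (fun _ : ι => ℝ) 1, (∀ k, x k ∈ Set.Icc (-ε) 0) → x ∈ S) :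
    ¬ Bornology.IsBounded S := by
  classical
  intro hb
  obtain ⟨r, hr⟩ := isBounded_iff_forall_norm_le.mp hb
  obtain ⟨n, hn⟩ := exists_nat_gt (r / ε)
  obtain ⟨s, hs⟩ := Infinite.exists_subset_card_eq ι n
  set x : lp (fun _ : ι => ℝ) 1 := ∑ i ∈ s, lp.single 1 i (-ε)
  have hx : ∀ k, x k = if k ∈ s then -ε else 0 := by
    simp only [x, lp.coeFn_sum, Finset.sum_apply, lp.single_apply,
      Finset.sum_pi_single, implies_true]
  have hxS : x ∈ S := hS x fun k => by
    rw [hx k]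
    split_ifs <;> constructor <;> linarith
  have hnorm : ‖x‖ = n * ε := by
    simp [x, lp.norm_sum_single_one, hs, abs_of_pos hε]
  have hxr := hr x hxS
  rw [div_lt_iff₀ hε] at hn
  linarith

end lp

/-- In `ℓ¹` (indexed by the positive integers), with `B_k = {x : x_k ≥ 1}` and
`D_k = {x : x_k ≤ -(2^k - 1)/2^k}`, for every `ε > 0` the intersection of all the
`(1+ε)`-enlargements contains every `x` with `-ε ≤ x_k ≤ 0` for all `k`, and is unbounded. -/
theorem l1_example_one_plus_eps_enlargements_unbounded :
    let B : ℕ+ → Set (lp (fun _ : ℕ+ => ℝ) 1) := fun k => {x | 1 ≤ x k}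
    let D : ℕ+ → Set (lp (fun _ : ℕ+ => ℝ) 1) :=
      fun k => {x | x k ≤ -((2 ^ (k : ℕ) - 1) / 2 ^ (k : ℕ))}
    ∀ ε : ℝ, 0 < ε →
      (∀ x : lp (fun _ : ℕ+ => ℝ) 1, (∀ k : ℕ+, -ε ≤ x k ∧ x k ≤ 0) →
        x ∈ (⋂ k, enl (B k) (1 + ε)) ∩ ⋂ k, enl (D k) (1 + ε)) ∧
      ¬ Bornology.IsBounded ((⋂ k, enl (B k) (1 + ε)) ∩ ⋂ k, enl (D k) (1 + ε)) := by
  intro B D ε hε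
  have hmem : ∀ x : lp (fun _ : ℕ+ => ℝ) 1, (∀ k : ℕ+, -ε ≤ x k ∧ x k ≤ 0) →
      x ∈ (⋂ k, enl (B k) (1 + ε)) ∩ ⋂ k, enl (D k) (1 + ε) := by
    intro x hx
    refine ⟨Set.mem_iInter.mpr fun k => ?_, Set.mem_iInter.mpr fun k => ?_⟩
    · refine (lp.infDist_le_norm_sub_apply (c := 1) (fun y hy => hy.ge) x).trans ?_
      exact abs_sub_le_one_add_of_mem_Icc (by norm_num) (hx k)
    · have hpow : (1 : ℝ) ≤ 2 ^ (k : ℕ) := one_le_pow₀ (by norm_num)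
      have hq0 : (0 : ℝ) ≤ (2 ^ (k : ℕ) - 1) / 2 ^ (k : ℕ) := div_nonneg (by linarith) (by positivity)
      have hq1 : ((2 : ℝ) ^ (k : ℕ) - 1) / 2 ^ (k : ℕ) ≤ 1 :=
        div_le_one_of_le₀ (by linarith) (by positivity)
      refine (lp.infDist_le_norm_sub_apply (fun y hy => hy.le) x).trans ?_
      exact abs_sub_le_one_add_of_mem_Icc ⟨by linarith, by linarith⟩ (hx k)
  exact ⟨hmem, lp.not_isBounded_of_forall_apply_mem_Icc hε hmem⟩
end
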